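/- Let A be a theory and X an object of A, with F(X) = Hom_A(X,−) the corresponding finitely generated free model. Then for every abelian group object p : B → F(X) in A-mod/F(X), the group of sections Der(F(X); B) is naturally isomorphic to the fiber p⁻¹(id_X) ⊆ B(X) over id_X ∈ F(X)(X). Consequently Der(F(X);−) is an exact functor and Ω¹_{F(X)} is a projective object of Ab(A-mod/F(X)). -/

import Mathlib

open CategoryTheory CategoryTheory.Limits Opposite

/-- The category `A-mod` of models of a theory `A`. -/
abbrev AMod (A : Type) [SmallCategory A] [HasFiniteProducts A] : Type 1 :=
  ObjectProperty.FullSubcategory (fun F : A ⥤ Type => Nonempty (PreservesFiniteProducts F))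

/-- The finitely generated free model `F(X) = Hom_A(X, -)`. -/
noncomputable abbrev freeModel {A : Type} [SmallCategory A] [HasFiniteProducts A]
    (X : A) : AMod A :=
  ⟨coyoneda.obj (op X), ⟨⟨fun _ => inferInstance⟩⟩⟩

universe v u

/-- An abelian group object in a category `𝒟`, via its functor of points. -/
structure AbGroupObject (𝒟 : Type u) [Category.{v} 𝒟] where
  pt : 𝒟
  add : ∀ {T : 𝒟}, (T ⟶ pt) → (T ⟶ pt) → (T ⟶ pt)
  zero : ∀ T : 𝒟, (T ⟶ pt)
  neg : ∀ {T : 𝒟}, (T ⟶ pt) → (T ⟶ pt)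
  add_assoc : ∀ {T : 𝒟} (f g h : T ⟶ pt), add (add f g) h = add f (add g h)
  add_comm : ∀ {T : 𝒟} (f g : T ⟶ pt), add f g = add g f
  zero_add : ∀ {T : 𝒟} (f : T ⟶ pt), add (zero T) f = f
  neg_add_cancel : ∀ {T : 𝒟} (f : T ⟶ pt), add (neg f) f = zero T
  add_natural : ∀ {T T' : 𝒟} (h : T ⟶ T') (f g : T' ⟶ pt),
    h ≫ add f g = add (h ≫ f) (h ≫ g)
  zero_natural : ∀ {T T' : 𝒟} (h : T ⟶ T'), h ≫ zero T' = zero T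

/-- Morphisms of abelian group objects. -/
def AbHom {𝒟 : Type u} [Category.{v} 𝒟] (B B' : AbGroupObject 𝒟) : Type _ :=
  { φ : B.pt ⟶ B'.pt //
    ∀ {T : 𝒟} (f g : T ⟶ B.pt), B.add f g ≫ φ = B'.add (f ≫ φ) (g ≫ φ) }

/-- Composition of morphisms of abelian group objects. -/
def AbHom.comp {𝒟 : Type u} [Category.{v} 𝒟] {B₁ B₂ B₃ : AbGroupObject 𝒟}
    (φ : AbHom B₁ B₂) (ψ : AbHom B₂ B₃) : AbHom B₁ B₃ :=
  ⟨φ.1 ≫ ψ.1, fun f g => by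
    rw [← Category.assoc, φ.2, ψ.2, Category.assoc, Category.assoc]⟩

/-!
A section of `p : B → F(X)` is a morphism of models `F(X) → B` over `F(X)`; by the Yoneda lemma
such a morphism is the same as an element `b ∈ B(X)`, and the section condition becomes `p(b) = id_X`.
Surjections of models are therefore surjective on sections, and `Ω¹`, which corepresents sections,
inherits the lifting property of a projective object.
-/

namespace CategoryTheory.Over

variable {C : Type*} [Category C] {Y : C}

def mkIdHomEquiv (B : Over Y) :
    (Over.mk (𝟙 Y) ⟶ B) ≃ { f : Y ⟶ B.left // f ≫ B.hom = 𝟙 Y } where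
  toFun s := ⟨s.left, Over.w s⟩
  invFun f := Over.homMk f.1 f.2
  left_inv _ := rfl
  right_inv _ := rfl

end CategoryTheory.Over

namespace AMod

variable {A : Type} [SmallCategory A] [HasFiniteProducts A]

noncomputable def freeModelHomEquiv (X : A) (M : AMod A) : (freeModel X ⟶ M) ≃ M.obj.obj X :=
  (ObjectProperty.fullyFaithfulι _).homEquiv.trans coyonedaEquiv

lemma freeModelHomEquiv_comp {X : A} {M N : AMod A} (f : freeModel X ⟶ M) (g : M ⟶ N) :
    freeModelHomEquiv X N (f ≫ g) = g.hom.app X (freeModelHomEquiv X M f) :=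
  rfl

lemma freeModelHomEquiv_id (X : A) : freeModelHomEquiv X (freeModel X) (𝟙 _) = 𝟙 X :=
  rfl

noncomputable def sectionEquivFiber (X : A) (B : Over (freeModel X)) :
    (Over.mk (𝟙 (freeModel X)) ⟶ B) ≃ { b : B.left.obj.obj X // B.hom.hom.app X b = 𝟙 X } :=
  (Over.mkIdHomEquiv B).trans <| (freeModelHomEquiv X B.left).subtypeEquiv fun f => by
    rw [← freeModelHomEquiv_comp, ← freeModelHomEquiv_id, Equiv.apply_eq_iff_eq]

lemma sectionEquivFiber_comp {X : A} {B B' : Over (freeModel X)}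
    (s : Over.mk (𝟙 (freeModel X)) ⟶ B) (ψ : B ⟶ B') :
    (sectionEquivFiber X B' (s ≫ ψ)).1 = ψ.left.hom.app X (sectionEquivFiber X B s).1 :=
  rfl

lemma exists_section_comp_eq {X : A} {B B' : Over (freeModel X)} (ψ : B ⟶ B')
    (hψ : Function.Surjective (ψ.left.hom.app X)) (s' : Over.mk (𝟙 (freeModel X)) ⟶ B') :
    ∃ s : Over.mk (𝟙 (freeModel X)) ⟶ B, s ≫ ψ = s' := by
  obtain ⟨b, hb⟩ := hψ (sectionEquivFiber X B' s').1
  have hfiber : B.hom.hom.app X b = 𝟙 X := by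
    rw [← Over.w ψ, ObjectProperty.FullSubcategory.comp_hom, NatTrans.comp_app,
      types_comp_apply, hb, (sectionEquivFiber X B' s').2]
  refine ⟨(sectionEquivFiber X B).symm ⟨b, hfiber⟩, (sectionEquivFiber X B').injective ?_⟩
  rw [Subtype.ext_iff, sectionEquivFiber_comp, Equiv.apply_symm_apply, hb]

end AMod

lemma AbHom.comp_surjective_of_corepresents {𝒟 : Type u} [Category.{v} 𝒟] {S : 𝒟}
    {Ω B B' : AbGroupObject 𝒟} (rB : AbHom Ω B ≃ (S ⟶ B.pt)) (rB' : AbHom Ω B' ≃ (S ⟶ B'.pt))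
    (ψ : AbHom B B') (hr : ∀ φ : AbHom Ω B, rB' (φ.comp ψ) = rB φ ≫ ψ.1)
    (hψ : ∀ s' : S ⟶ B'.pt, ∃ s : S ⟶ B.pt, s ≫ ψ.1 = s') :
    Function.Surjective (fun φ : AbHom Ω B => φ.comp ψ) := by
  intro φ'
  obtain ⟨s, hs⟩ := hψ (rB' φ')
  exact ⟨rB.symm s, rB'.injective (by rw [hr, rB.apply_symm_apply, hs])⟩

/-- **Sections over a free model.**  Let `A` be a theory, `X ∈ A` and
`F(X) = Hom_A(X,-)` the corresponding free model.  Then: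
* for every abelian group object `p : B → F(X)` in `A-mod/F(X)`, the group of
  sections `Der(F(X);B)` is naturally isomorphic to the fiber `p⁻¹(id_X) ⊆ B(X)`
  over `id_X ∈ F(X)(X)`;
* consequently `Der(F(X);-)` is exact (it preserves componentwise surjections), and
* any representing object `Ω¹` of `Der(F(X);-)` is projective. -/
theorem stmt18 {A : Type} [SmallCategory A] [HasFiniteProducts A] (X : A) :
    ∃ e : ∀ B : AbGroupObject (Over (freeModel X)),
        (Over.mk (𝟙 (freeModel X)) ⟶ B.pt) ≃
          { b : B.pt.left.obj.obj X // B.pt.hom.hom.app X b = 𝟙 X },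
      -- naturality of the identification of `Der(F(X);B)` with the fiber over `id_X`
      (∀ (B B' : AbGroupObject (Over (freeModel X))) (ψ : B.pt ⟶ B'.pt)
          (s : Over.mk (𝟙 (freeModel X)) ⟶ B.pt),
        ((e B') (s ≫ ψ)).1 = ψ.left.hom.app X ((e B) s).1) ∧
      -- `Der(F(X);-)` preserves surjections (exactness)
      (∀ (B B' : AbGroupObject (Over (freeModel X))) (ψ : AbHom B B'),
        (∀ Y : A, Function.Surjective (ψ.1.left.hom.app Y)) →
          ∀ s' : Over.mk (𝟙 (freeModel X)) ⟶ B'.pt,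
            ∃ s : Over.mk (𝟙 (freeModel X)) ⟶ B.pt, s ≫ ψ.1 = s') ∧
      -- any object representing `Der(F(X);-)` is projective
      (∀ (Ω : AbGroupObject (Over (freeModel X)))
          (r : ∀ B : AbGroupObject (Over (freeModel X)),
            AbHom Ω B ≃ (Over.mk (𝟙 (freeModel X)) ⟶ B.pt)),
        (∀ (B B' : AbGroupObject (Over (freeModel X))) (ψ : AbHom B B')
            (φ : AbHom Ω B), r B' (φ.comp ψ) = r B φ ≫ ψ.1) →
        ∀ (B B' : AbGroupObject (Over (freeModel X))) (ψ : AbHom B B'),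
          (∀ Y : A, Function.Surjective (ψ.1.left.hom.app Y)) →
            Function.Surjective (fun φ : AbHom Ω B => φ.comp ψ)) := by
  have hlift : ∀ (B B' : AbGroupObject (Over (freeModel X))) (ψ : AbHom B B'),
      (∀ Y : A, Function.Surjective (ψ.1.left.hom.app Y)) →
        ∀ s' : Over.mk (𝟙 (freeModel X)) ⟶ B'.pt,
          ∃ s : Over.mk (𝟙 (freeModel X)) ⟶ B.pt, s ≫ ψ.1 = s' :=
    fun _ _ ψ hψ => AMod.exists_section_comp_eq ψ.1 (hψ X)
  refine ⟨fun B => AMod.sectionEquivFiber X B.pt,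
    fun _ _ ψ s => AMod.sectionEquivFiber_comp s ψ, hlift, ?_⟩
  intro Ω r hr B B' ψ hψ
  exact AbHom.comp_surjective_of_corepresents (r B) (r B') ψ (hr B B' ψ) (hlift B B' ψ hψ)
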